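/- arXiv:2409.10084 — 5 statements merged into one kernel-verified Lean document; each statement's English description precedes it below -/
import Mathlib

section
/- Let F : ℕ → ℤ → ℤ → ℕ be a sequence of matrices such that for every n, F n (i+1) (j+1) = F n i j for all i, j ∈ ℤ and every row {j | F n i j ≠ 0} is finite, and let r n = ∑ᶠ j, F n 0 j denote the common row sum of F n. Define the height vectors H : ℕ → ℤ → ℕ by H 0 j = 1 for all j and H (n+1) i = ∑ᶠ j, (F n i j) * (H n j). Then for every n ∈ ℕ and every j ∈ ℤ, H n j = ∏_{l ∈ Finset.range n} r l. -/
/-!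
Every row of a Toeplitz matrix is a translate of row `0`, so all rows have the same sum `r`.
Hence if `H` is constant on level `n`, with value `c`, then `H` is constant on level `n + 1`,
with value `r n * c`, and induction on `n` gives the product formula.
-/

section Toeplitz

variable {M : Type*} {f : ℤ → ℤ → M}

theorem toeplitz_apply_add_add (hf : ∀ i j : ℤ, f (i + 1) (j + 1) = f i j) (k i j : ℤ) :
    f (i + k) (j + k) = f i j := by
  induction k with
  | zero => simp
  | succ k ih => rw [← add_assoc, ← add_assoc, hf, ih]
  | pred k ih =>
    rw [← ih, ← hf]
    congr 1 <;> ring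

theorem finsum_toeplitz_row [AddCommMonoid M] (hf : ∀ i j : ℤ, f (i + 1) (j + 1) = f i j)
    (i : ℤ) : ∑ᶠ j, f i j = ∑ᶠ j, f 0 j := by
  rw [← finsum_comp_equiv (Equiv.addRight i)]
  refine finsum_congr fun j => ?_
  simpa using toeplitz_apply_add_add hf i 0 j

end Toeplitz

theorem heights_of_horizontally_stationary_general (F : ℕ → ℤ → ℤ → ℕ)
    (hF : ∀ n : ℕ, ∀ i j : ℤ, F n (i + 1) (j + 1) = F n i j)
    (r : ℕ → ℕ) (hr : ∀ n : ℕ, r n = ∑ᶠ j : ℤ, F n 0 j)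
    (H : ℕ → ℤ → ℕ)
    (hH0 : ∀ j : ℤ, H 0 j = 1)
    (hHrec : ∀ n : ℕ, ∀ i : ℤ, H (n + 1) i = ∑ᶠ j : ℤ, F n i j * H n j) :
    ∀ n : ℕ, ∀ j : ℤ, H n j = ∏ l ∈ Finset.range n, r l := by
  intro n
  induction n with
  | zero => simp [hH0]
  | succ n ih =>
    intro i
    calc H (n + 1) i = ∑ᶠ j, F n i j * ∏ l ∈ Finset.range n, r l := by
          simp only [hHrec, ih]
      _ = (∑ᶠ j, F n i j) * ∏ l ∈ Finset.range n, r l := (finsum_mul _ _).symm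
      _ = ∏ l ∈ Finset.range (n + 1), r l := by
          rw [finsum_toeplitz_row (hF n), ← hr, Finset.prod_range_succ, mul_comm]

theorem heights_of_horizontally_stationary (F : ℕ → ℤ → ℤ → ℕ)
    (hF : ∀ n : ℕ, ∀ i j : ℤ, F n (i + 1) (j + 1) = F n i j)
    (hfin : ∀ n : ℕ, ∀ i : ℤ, {j : ℤ | F n i j ≠ 0}.Finite)
    (r : ℕ → ℕ) (hr : ∀ n : ℕ, r n = ∑ᶠ j : ℤ, F n 0 j)
    (H : ℕ → ℤ → ℕ)
    (hH0 : ∀ j : ℤ, H 0 j = 1)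
    (hHrec : ∀ n : ℕ, ∀ i : ℤ, H (n + 1) i = ∑ᶠ j : ℤ, F n i j * H n j) :
    ∀ n : ℕ, ∀ j : ℤ, H n j = ∏ l ∈ Finset.range n, r l :=
  heights_of_horizontally_stationary_general F hF r hr H hH0 hHrec
end

section
/- Let F : ℕ → ℤ → ℤ → ℕ be such that for every n, F n (i+1) (j+1) = F n i j for all i, j ∈ ℤ and every row {j | F n i j ≠ 0} is finite. Let i, i' : ℕ → ℤ be sequences with F n (i (n+1)) (i n) > 0 and F n (i' (n+1)) (i' n) > 0 for all n. Define σ n = (∑ᶠ j, F n (i (n+1)) j) - F n (i (n+1)) (i n) and σ' n = (∑ᶠ j, F n (i' (n+1)) j) - F n (i' (n+1)) (i' n). Assume the function n ↦ (σ n : ℝ) / (F n (i (n+1)) (i n)) is summable. Then the function n ↦ (σ' n : ℝ) / (F n (i' (n+1)) (i' n)) is summable if and only if there exist k ∈ ℤ and N ∈ ℕ such that i' n = i n + k for all n ≥ N. -/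
/-!
Horizontal stationarity means that `F n a b` depends only on the diagonal `a - b`, so all rows
of `F n` have the same sum. Summability of `σ n / F n (i (n+1)) (i n)` forces
`σ n < F n (i (n+1)) (i n)` eventually: the entry on the path exceeds half of its row sum.
A row has at most one such majority entry, so two odometers with finite extensions eventually
follow the same diagonal `i (n+1) - i n` at every level, which makes them tail parallel.
Conversely, shifting a path by a constant changes neither its entries nor the row sums, so the
two series agree eventually.
-/

open Filter Function

lemma add_le_finsum_of_ne {α M : Type*} [AddCommMonoid M] [PartialOrder M]
    [CanonicallyOrderedAdd M] {f : α → M} (hf : HasFiniteSupport f) {a b : α} (hab : a ≠ b) :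
    f a + f b ≤ ∑ᶠ x, f x := by
  classical
  rw [finsum_eq_sum_of_support_subset f (s := hf.toFinset ∪ {a, b})
    fun x hx => Finset.mem_union_left _ (hf.mem_toFinset.2 hx), ← Finset.sum_pair hab]
  exact Finset.sum_le_sum_of_subset Finset.subset_union_right

lemma eq_of_finsum_sub_lt {α : Type*} {f : α → ℕ} (hf : HasFiniteSupport f) {a b : α}
    (ha : ∑ᶠ x, f x - f a < f a) (hb : ∑ᶠ x, f x - f b < f b) : a = b := by
  by_contra hab
  have := add_le_finsum_of_ne hf hab
  omega

lemma eventually_lt_of_summable_div {a b : ℕ → ℝ} (hb : ∀ n, 0 < b n)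
    (h : Summable fun n => a n / b n) : ∀ᶠ n in atTop, a n < b n := by
  filter_upwards [h.tendsto_atTop_zero.eventually_lt_const one_pos] with n hn
  rwa [div_lt_one (hb n)] at hn

lemma exists_eventually_eq_add_of_eventually_sub_eq {G : Type*} [AddCommGroup G] {u v : ℕ → G}
    (h : ∀ᶠ n in atTop, v (n + 1) - v n = u (n + 1) - u n) :
    ∃ (k : G) (N : ℕ), ∀ n ≥ N, v n = u n + k := by
  obtain ⟨N, hN⟩ := h.exists_forall_of_atTop
  refine ⟨v N - u N, N, fun n hn => ?_⟩
  induction n, hn using Nat.le_induction with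
  | base => abel
  | succ m hm ih =>
    rw [← sub_add_cancel (v (m + 1)) (v m), hN m hm, ih]
    abel

def IsToeplitz {α : Type*} (f : ℤ → ℤ → α) : Prop :=
  ∀ a b, f (a + 1) (b + 1) = f a b

namespace IsToeplitz

variable {α : Type*} {f : ℤ → ℤ → α}

lemma apply_add_add (hf : IsToeplitz f) (a b k : ℤ) : f (a + k) (b + k) = f a b := by
  induction k using Int.induction_on with
  | zero => simp
  | succ k ih => rw [← add_assoc, ← add_assoc, hf, ih]
  | pred k ih => rw [← ih, ← hf]; ring_nf

lemma finsum_row_add [AddCommMonoid α] (hf : IsToeplitz f) (r k : ℤ) :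
    ∑ᶠ j, f (r + k) j = ∑ᶠ j, f r j := by
  rw [← finsum_comp_equiv (Equiv.addRight k)]
  simp only [Equiv.coe_addRight, hf.apply_add_add]

lemma sub_eq_of_finsum_sub_lt {f : ℤ → ℤ → ℕ} (hf : IsToeplitz f) {r c r' c' : ℤ}
    (hr : HasFiniteSupport (f r)) (h : ∑ᶠ j, f r j - f r c < f r c)
    (h' : ∑ᶠ j, f r' j - f r' c' < f r' c') : r - c = r' - c' := by
  have hrow : f r' = f (r + (r' - r)) := by rw [add_sub_cancel]
  rw [hrow, hf.finsum_row_add, ← sub_add_cancel c' (r' - r), hf.apply_add_add] at h'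
  have := eq_of_finsum_sub_lt hr h h'
  omega

end IsToeplitz

theorem tail_parallel_iff_finite_extension (F : ℕ → ℤ → ℤ → ℕ)
    (hF : ∀ n : ℕ, ∀ i j : ℤ, F n (i + 1) (j + 1) = F n i j)
    (hfin : ∀ n : ℕ, ∀ i : ℤ, {j : ℤ | F n i j ≠ 0}.Finite)
    (i i' : ℕ → ℤ)
    (hi : ∀ n : ℕ, 0 < F n (i (n + 1)) (i n))
    (hi' : ∀ n : ℕ, 0 < F n (i' (n + 1)) (i' n))
    (σ σ' : ℕ → ℕ)
    (hσ : ∀ n : ℕ, σ n = (∑ᶠ j : ℤ, F n (i (n + 1)) j) - F n (i (n + 1)) (i n))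
    (hσ' : ∀ n : ℕ, σ' n = (∑ᶠ j : ℤ, F n (i' (n + 1)) j) - F n (i' (n + 1)) (i' n))
    (hsum : Summable fun n : ℕ => (σ n : ℝ) / (F n (i (n + 1)) (i n) : ℝ)) :
    (Summable fun n : ℕ => (σ' n : ℝ) / (F n (i' (n + 1)) (i' n) : ℝ)) ↔
    (∃ (k : ℤ) (N : ℕ), ∀ n ≥ N, i' n = i n + k) := by
  constructor
  · intro hsum'
    refine exists_eventually_eq_add_of_eventually_sub_eq ?_
    filter_upwards [eventually_lt_of_summable_div (by exact_mod_cast hi) hsum,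
      eventually_lt_of_summable_div (by exact_mod_cast hi') hsum'] with n hn hn'
    rw [hσ] at hn
    rw [hσ'] at hn'
    exact IsToeplitz.sub_eq_of_finsum_sub_lt (hF n) (hfin n _) (by exact_mod_cast hn')
      (by exact_mod_cast hn)
  · rintro ⟨k, N, hk⟩
    refine hsum.congr_atTop (eventually_atTop.2 ⟨N, fun n hn => ?_⟩)
    dsimp only
    rw [hσ, hσ', hk n hn, hk (n + 1) (by omega), IsToeplitz.apply_add_add (hF n),
      IsToeplitz.finsum_row_add (hF n)]
end

section
/- Let a : ℕ → ℕ with a k ≥ 1 for all k. Define g : ℕ → ℤ → ℕ by g 0 0 = 1 and g 0 j = 0 for j ≠ 0, and g (m+1) j = g m (j-1) + (a m) * (g m j) + g m (j+1). Then for every m ∈ ℕ, g m 0 = ∑_{k, 0 ≤ 2k ≤ m} (Nat.choose (2k) k) * (∑_{S ∈ (Finset.range m).powersetCard (2k)} ∏_{j ∈ (Finset.range m) \ S} a j). -/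
/-!
Each step of the recurrence multiplies by the kernel `T 1 + C (a m) + T (-1)`, so `g m j` is the
coefficient of `T j` in the Laurent polynomial `∏_{i < m} ((T 1 + T (-1)) + C (a i))`. Expanding
this product over the set `S` of factors contributing `T 1 + T (-1)`, the constant term is
`∑_S [T^0] (T 1 + T (-1)) ^ #S * ∏_{i ∉ S} a i`, and by the binomial theorem
`[T^0] (T 1 + T (-1)) ^ s` is `(2k).choose k` for `s = 2k` and `0` for odd `s`.
-/

open Finset LaurentPolynomial AddMonoidAlgebra

theorem Finset.sum_range_succ_eq_sum_range_div_two_succ {M : Type*} [AddCommMonoid M]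
    (f : ℕ → M) (hf : ∀ s, ¬Even s → f s = 0) (m : ℕ) :
    ∑ s ∈ range (m + 1), f s = ∑ k ∈ range (m / 2 + 1), f (2 * k) := by
  rw [← sum_image (g := (2 * ·)) fun _ _ _ _ h ↦ by simpa using h]
  refine (sum_subset (fun s ↦ ?_) fun s hsm hs ↦ hf s ?_).symm
  · simp only [mem_image, mem_range]
    omega
  · rintro ⟨k, rfl⟩
    exact hs (mem_image.2 ⟨k, by simp only [mem_range] at hsm ⊢; omega, by ring⟩)

namespace LaurentPolynomial

variable {R : Type*} [CommSemiring R]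

theorem coeff_mul_T (p : R[T;T⁻¹]) (n j : ℤ) : (p * T n).coeff j = p.coeff (j - n) := by
  rw [T, coeff_mul_single_apply, mul_one, sub_eq_add_neg]

theorem coeff_mul_C (p : R[T;T⁻¹]) (c : R) (j : ℤ) : (p * C c).coeff j = p.coeff j * c := by
  rw [← single_eq_C, coeff_mul_single_apply, neg_zero, add_zero]

theorem coeff_mul_T_one_add_C_add_T_neg_one (p : R[T;T⁻¹]) (c : R) (j : ℤ) :
    (p * (T 1 + C c + T (-1))).coeff j = p.coeff (j - 1) + c * p.coeff j + p.coeff (j + 1) := by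
  rw [mul_add, mul_add, coeff_add, coeff_add, Finsupp.add_apply, Finsupp.add_apply, coeff_mul_T,
    coeff_mul_T, coeff_mul_C, sub_neg_eq_add, mul_comm]

theorem coeff_zero_T_one_add_T_neg_one_pow (s : ℕ) :
    ((T 1 + T (-1) : R[T;T⁻¹]) ^ s).coeff 0 = if Even s then (s.choose (s / 2) : R) else 0 := by
  have hterm : ∀ u ∈ range (s + 1), (T 1 ^ u * T (-1) ^ (s - u) * (s.choose u : R[T;T⁻¹])).coeff 0
      = if 2 * u = s then (s.choose u : R) else 0 := by
    intro u hu
    rw [T_pow, T_pow, ← T_add, T, natCast_def, single_mul_single, coeff_single,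
      Finsupp.single_apply, add_zero, one_mul]
    congr 1
    simp only [mem_range] at hu
    apply propext
    omega
  rw [add_pow, coeff_sum, Finset.sum_apply', sum_congr rfl hterm]
  split_ifs with hs
  · obtain ⟨k, rfl⟩ := hs
    rw [sum_eq_single k (fun u _ hu ↦ if_neg (by omega))
      (fun hk ↦ absurd (mem_range.2 (by omega)) hk), if_pos (by omega),
      show (k + k) / 2 = k by omega]
  · exact sum_eq_zero fun u _ ↦ if_neg fun h ↦ hs ⟨u, by omega⟩

theorem coeff_zero_prod_T_one_add_C_add_T_neg_one {ι : Type*} [DecidableEq ι] (s : Finset ι)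
    (c : ι → R) :
    (∏ i ∈ s, (T 1 + C (c i) + T (-1))).coeff 0 =
      ∑ k ∈ range (#s / 2 + 1), ((2 * k).choose k : R) *
        ∑ t ∈ s.powersetCard (2 * k), ∏ i ∈ s \ t, c i := by
  have hsplit : ∀ i ∈ s, T 1 + C (c i) + T (-1) = (T 1 + T (-1) : R[T;T⁻¹]) + C (c i) :=
    fun i _ ↦ add_right_comm _ _ _
  rw [prod_congr rfl hsplit, prod_add, coeff_sum, Finset.sum_apply']
  simp_rw [prod_const, ← map_prod, coeff_mul_C, coeff_zero_T_one_add_T_neg_one_pow]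
  have hcard : ∀ j ∈ range (#s + 1), ∑ t ∈ powersetCard j s,
      (if Even #t then ((#t).choose (#t / 2) : R) else 0) * ∏ i ∈ s \ t, c i =
      (if Even j then (j.choose (j / 2) : R) else 0) * ∑ t ∈ powersetCard j s, ∏ i ∈ s \ t, c i :=
    fun j _ ↦ by
      rw [mul_sum]
      exact sum_congr rfl fun t ht ↦ by rw [(mem_powersetCard.1 ht).2]
  rw [sum_powerset, sum_congr rfl hcard,
    sum_range_succ_eq_sum_range_div_two_succ _ fun j hj ↦ by rw [if_neg hj, zero_mul]]
  refine sum_congr rfl fun k _ ↦ ?_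
  rw [if_pos (even_two_mul k), Nat.mul_div_cancel_left k two_pos]

theorem eq_coeff_prod_of_tridiagonal_recurrence (a : ℕ → R) (g : ℕ → ℤ → R)
    (hg0 : g 0 0 = 1) (hg0' : ∀ j : ℤ, j ≠ 0 → g 0 j = 0)
    (hgrec : ∀ (m : ℕ) (j : ℤ), g (m + 1) j = g m (j - 1) + a m * g m j + g m (j + 1))
    (m : ℕ) (j : ℤ) : g m j = (∏ i ∈ range m, (T 1 + C (a i) + T (-1))).coeff j := by
  induction m generalizing j with
  | zero =>
    rw [prod_range_zero, one_def, coeff_single, Finsupp.single_apply]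
    by_cases hj : j = 0
    · rw [hj, if_pos rfl, hg0]
    · rw [if_neg (Ne.symm hj), hg0' j hj]
  | succ m ih =>
    rw [prod_range_succ, coeff_mul_T_one_add_C_add_T_neg_one, hgrec, ih, ih, ih]

end LaurentPolynomial

theorem tridiagonal_diagonal_entry_formula_general (a : ℕ → ℕ)
    (g : ℕ → ℤ → ℕ)
    (hg0 : g 0 0 = 1) (hg0' : ∀ j : ℤ, j ≠ 0 → g 0 j = 0)
    (hgrec : ∀ (m : ℕ) (j : ℤ), g (m + 1) j = g m (j - 1) + a m * g m j + g m (j + 1)) :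
    ∀ m : ℕ, g m 0 =
      ∑ k ∈ Finset.range (m / 2 + 1), (Nat.choose (2 * k) k) *
        ∑ S ∈ (Finset.range m).powersetCard (2 * k),
          ∏ j ∈ (Finset.range m) \ S, a j := by
  intro m
  rw [eq_coeff_prod_of_tridiagonal_recurrence a g hg0 hg0' hgrec m 0,
    coeff_zero_prod_T_one_add_C_add_T_neg_one, card_range]
  simp only [Nat.cast_id]

theorem tridiagonal_diagonal_entry_formula (a : ℕ → ℕ) (ha : ∀ k : ℕ, 1 ≤ a k)
    (g : ℕ → ℤ → ℕ)
    (hg0 : g 0 0 = 1) (hg0' : ∀ j : ℤ, j ≠ 0 → g 0 j = 0)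
    (hgrec : ∀ (m : ℕ) (j : ℤ), g (m + 1) j = g m (j - 1) + a m * g m j + g m (j + 1)) :
    ∀ m : ℕ, g m 0 =
      ∑ k ∈ Finset.range (m / 2 + 1), (Nat.choose (2 * k) k) *
        ∑ S ∈ (Finset.range m).powersetCard (2 * k),
          ∏ j ∈ (Finset.range m) \ S, a j :=
  tridiagonal_diagonal_entry_formula_general a g hg0 hg0' hgrec
end

section
/- Let a : ℕ → ℕ satisfy a j ≥ 1 for all j, and assume the function j ↦ 1/(a j : ℝ) is not summable. Fix n ∈ ℕ. For m ∈ ℕ, set Λ = Finset.Ico n (n+m), P m = ∏_{j ∈ Λ} (a j : ℝ)/((a j : ℝ) + 2), E l m = ∑_{S ∈ Λ.powersetCard l} ∏_{j ∈ S} (a j : ℝ)⁻¹, and g m = P m * ∑_{k, 0 ≤ 2k ≤ m} (Nat.choose (2k) k : ℝ) * E (2k) m. Then g m → 0 as m → ∞ if and only if for every l ∈ ℕ, P m * E l m → 0 as m → ∞. -/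
/-!
Write `x j = 1 / a j ∈ [0, 1]` and `e_l` for the elementary symmetric sums of the `x j` over
`Λ`. Since `P m · ∏ (1 + 2 x j) ≤ 1` and `∏ (1 + 2 x j) = ∑ 2^l e_l`, the weights `4^k P e_{2k}`
sum to at most `1`, so `g m = ∑ (C(2k,k) / 4^k) · 4^k P e_{2k}` is an average of sequences
tending to `0` against coefficients tending to `0` (`C(2k,k)^2 (2k+1) ≤ 16^k`); hence `g → 0`.
Conversely `g` dominates every even term `P e_{2k}`, and an odd term is eventually dominated by
the next even one: `(∑ x j - l) e_l ≤ (l + 1) e_{l+1}` and `∑ x j → ∞`.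
-/

open Filter Finset Topology

theorem tendsto_sum_mul_of_tendsto_zero {α : Type*} {L : Filter α} {c : ℕ → ℝ}
    {w : ℕ → α → ℝ} {s : α → Finset ℕ} (hc : Tendsto c atTop (𝓝 0))
    (hw0 : ∀ k m, 0 ≤ w k m) (hw1 : ∀ m, ∑ k ∈ s m, w k m ≤ 1)
    (hw : ∀ k, Tendsto (w k) L (𝓝 0)) :
    Tendsto (fun m => ∑ k ∈ s m, c k * w k m) L (𝓝 0) := by
  rw [Metric.tendsto_nhds]
  intro ε hε
  obtain ⟨K, hK⟩ := Metric.tendsto_atTop.1 hc (ε / 2) (half_pos hε)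
  have hhead : Tendsto (fun m => ∑ k ∈ range K, |c k| * w k m) L (𝓝 0) := by
    simpa using tendsto_finsetSum (range K) fun k _ => (hw k).const_mul |c k|
  filter_upwards [hhead.eventually (gt_mem_nhds (half_pos hε))] with m hm
  have hsplit : ∀ k, |c k| * w k m ≤ ε / 2 * w k m + if k < K then |c k| * w k m else 0 := by
    intro k
    split_ifs with hk
    · nlinarith [hw0 k m]
    · have := (Real.dist_0_eq_abs _ ▸ hK k (not_lt.1 hk)).le
      nlinarith [hw0 k m]
  rw [Real.dist_0_eq_abs]
  calc |∑ k ∈ s m, c k * w k m| ≤ ∑ k ∈ s m, |c k| * w k m := by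
        simpa only [abs_mul, abs_of_nonneg (hw0 _ m)] using
          abs_sum_le_sum_abs (fun k => c k * w k m) (s m)
    _ ≤ ∑ k ∈ s m, (ε / 2 * w k m + if k < K then |c k| * w k m else 0) :=
        sum_le_sum fun k _ => hsplit k
    _ = ε / 2 * ∑ k ∈ s m, w k m + ∑ k ∈ s m with k < K, |c k| * w k m := by
        rw [sum_add_distrib, mul_sum, sum_filter]
    _ ≤ ε / 2 * 1 + ∑ k ∈ range K, |c k| * w k m := by
        gcongr
        · exact hw1 m
        · intro k _ _
          exact mul_nonneg (abs_nonneg _) (hw0 k m)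
        · intro k hk
          exact mem_range.2 (mem_filter.1 hk).2
    _ < ε := by linarith

theorem tendsto_zero_of_tendsto_sum_mul {α : Type*} {L : Filter α} {c : ℕ → ℝ}
    {f : ℕ → α → ℝ} {s : α → Finset ℕ} (hc : ∀ k, 1 ≤ c k) (hf : ∀ k m, 0 ≤ f k m)
    (hs : ∀ k, ∀ᶠ m in L, k ∈ s m) (h : Tendsto (fun m => ∑ k ∈ s m, c k * f k m) L (𝓝 0))
    (k : ℕ) : Tendsto (f k) L (𝓝 0) := by
  refine squeeze_zero' (.of_forall (hf k)) ?_ h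
  filter_upwards [hs k] with m hk
  calc f k m ≤ c k * f k m := le_mul_of_one_le_left (hf k m) (hc k)
    _ ≤ ∑ k ∈ s m, c k * f k m :=
      single_le_sum (fun i _ => mul_nonneg (zero_le_one.trans (hc i)) (hf i m)) hk

theorem Nat.centralBinom_sq_mul_le_sixteen_pow (k : ℕ) :
    k.centralBinom ^ 2 * (2 * k + 1) ≤ 16 ^ k := by
  induction k with
  | zero => norm_num
  | succ k ih =>
    have key : (k + 1) ^ 2 * ((k + 1).centralBinom ^ 2 * (2 * (k + 1) + 1))
        ≤ (k + 1) ^ 2 * 16 ^ (k + 1) :=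
      calc (k + 1) ^ 2 * ((k + 1).centralBinom ^ 2 * (2 * (k + 1) + 1))
          = ((k + 1) * (k + 1).centralBinom) ^ 2 * (2 * k + 3) := by ring
        _ = (2 * k + 1) * (2 * k + 3) * (4 * (2 * k + 1) * k.centralBinom ^ 2) := by
          rw [Nat.succ_mul_centralBinom_succ]; ring
        _ ≤ (2 * k + 2) ^ 2 * (4 * (2 * k + 1) * k.centralBinom ^ 2) := by
          gcongr; nlinarith
        _ = 16 * (k + 1) ^ 2 * (k.centralBinom ^ 2 * (2 * k + 1)) := by ring
        _ ≤ 16 * (k + 1) ^ 2 * 16 ^ k := Nat.mul_le_mul_left _ ih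
        _ = (k + 1) ^ 2 * 16 ^ (k + 1) := by ring
    exact Nat.le_of_mul_le_mul_left key (by positivity)

theorem tendsto_centralBinom_div_four_pow :
    Tendsto (fun k : ℕ => (k.centralBinom : ℝ) / 4 ^ k) atTop (𝓝 0) := by
  have hsq : Tendsto (fun k : ℕ => ((k.centralBinom : ℝ) / 4 ^ k) ^ 2) atTop (𝓝 0) := by
    refine squeeze_zero (fun k => sq_nonneg _) (fun k => ?_)
      tendsto_one_div_add_atTop_nhds_zero_nat
    have h := Nat.centralBinom_sq_mul_le_sixteen_pow k
    rw [div_pow, ← pow_mul, mul_comm, pow_mul, div_le_div_iff₀ (by positivity) (by positivity)]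
    norm_num
    exact_mod_cast (Nat.mul_le_mul_left _ (by omega)).trans h
  convert hsq.sqrt using 2 with k
  · rw [Real.sqrt_sq (by positivity)]
  · simp

section SymmetricSums

variable {ι : Type*} [DecidableEq ι]

theorem sum_powersetCard_sum_sdiff_mul_prod {R : Type*} [CommSemiring R] (s : Finset ι)
    (x : ι → R) (l : ℕ) :
    ∑ S ∈ s.powersetCard l, ∑ j ∈ s \ S, x j * ∏ i ∈ S, x i
      = (l + 1) * ∑ T ∈ s.powersetCard (l + 1), ∏ i ∈ T, x i := by
  have hT : ∀ T ∈ s.powersetCard (l + 1), ∑ _j ∈ T, ∏ i ∈ T, x i = (l + 1) * ∏ i ∈ T, x i := by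
    intro T hT
    rw [sum_const, (mem_powersetCard.1 hT).2, nsmul_eq_mul]
    push_cast; rfl
  rw [mul_sum, ← sum_congr rfl hT, sum_sigma', sum_sigma']
  refine sum_bij' (fun p _ => ⟨insert p.2 p.1, p.2⟩) (fun p _ => ⟨p.1.erase p.2, p.2⟩)
    ?_ ?_ ?_ ?_ ?_
  · rintro ⟨S, j⟩ hp
    simp only [mem_sigma, mem_powersetCard, Finset.mem_sdiff] at hp ⊢
    obtain ⟨⟨hSs, hS⟩, hjs, hjS⟩ := hp
    exact ⟨⟨insert_subset hjs hSs, by rw [card_insert_of_notMem hjS, hS]⟩, mem_insert_self _ _⟩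
  · rintro ⟨T, j⟩ hp
    simp only [mem_sigma, mem_powersetCard, Finset.mem_sdiff] at hp ⊢
    obtain ⟨⟨hTs, hT⟩, hjT⟩ := hp
    refine ⟨⟨(erase_subset _ _).trans hTs, ?_⟩, hTs hjT, notMem_erase _ _⟩
    rw [card_erase_of_mem hjT, hT, Nat.add_sub_cancel]
  · rintro ⟨S, j⟩ hp
    simp only [mem_sigma, mem_powersetCard, Finset.mem_sdiff] at hp
    simp only [erase_insert hp.2.2]
  · rintro ⟨T, j⟩ hp
    simp only [mem_sigma] at hp
    simp only [insert_erase hp.2]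
  · rintro ⟨S, j⟩ hp
    simp only [mem_sigma, Finset.mem_sdiff] at hp
    simp only [prod_insert hp.2.2]

theorem sum_sub_mul_sum_powersetCard_le (s : Finset ι) {x : ι → ℝ} (hx0 : ∀ j ∈ s, 0 ≤ x j)
    (hx1 : ∀ j ∈ s, x j ≤ 1) (l : ℕ) :
    (∑ j ∈ s, x j - l) * ∑ S ∈ s.powersetCard l, ∏ i ∈ S, x i
      ≤ (l + 1) * ∑ T ∈ s.powersetCard (l + 1), ∏ i ∈ T, x i := by
  rw [← sum_powersetCard_sum_sdiff_mul_prod, mul_sum]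
  refine sum_le_sum fun S hS => ?_
  obtain ⟨hSs, hS⟩ := mem_powersetCard.1 hS
  have hSl : ∑ j ∈ S, x j ≤ l := by
    simpa [hS] using sum_le_card_nsmul S x 1 fun j hj => hx1 j (hSs hj)
  rw [← sum_mul, sum_sdiff_eq_sub hSs]
  exact mul_le_mul_of_nonneg_right (by linarith) (prod_nonneg fun j hj => hx0 j (hSs hj))

theorem sum_powersetCard_le_succ_of_le_sum (s : Finset ι) {x : ι → ℝ}
    (hx0 : ∀ j ∈ s, 0 ≤ x j) (hx1 : ∀ j ∈ s, x j ≤ 1) {l : ℕ} (hl : 2 * l + 1 ≤ ∑ j ∈ s, x j) :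
    ∑ S ∈ s.powersetCard l, ∏ i ∈ S, x i ≤ ∑ T ∈ s.powersetCard (l + 1), ∏ i ∈ T, x i := by
  have he : 0 ≤ ∑ S ∈ s.powersetCard l, ∏ i ∈ S, x i :=
    sum_nonneg fun S hS => prod_nonneg fun j hj => hx0 j ((mem_powersetCard.1 hS).1 hj)
  have := sum_sub_mul_sum_powersetCard_le s hx0 hx1 l
  nlinarith

theorem sum_sum_powersetCard_le_prod_one_add (s : Finset ι) {x : ι → ℝ}
    (hx : ∀ j ∈ s, 0 ≤ x j) (t : Finset ℕ) :
    ∑ l ∈ t, ∑ S ∈ s.powersetCard l, ∏ i ∈ S, x i ≤ ∏ j ∈ s, (1 + x j) := by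
  rw [prod_one_add, ← sum_biUnion (s.pairwise_disjoint_powersetCard.set_pairwise _)]
  refine sum_le_sum_of_subset_of_nonneg ?_ fun S hS _ => ?_
  · exact biUnion_subset.2 fun l _ S hS => mem_powerset.2 (mem_powersetCard.1 hS).1
  · exact prod_nonneg fun j hj => hx j (mem_powerset.1 hS hj)

theorem sum_four_pow_mul_sum_powersetCard_le (s : Finset ι) {x : ι → ℝ}
    (hx : ∀ j ∈ s, 0 ≤ x j) (t : Finset ℕ) :
    ∑ k ∈ t, 4 ^ k * ∑ S ∈ s.powersetCard (2 * k), ∏ i ∈ S, x i ≤ ∏ j ∈ s, (1 + 2 * x j) := by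
  have hscale : ∀ k, 4 ^ k * ∑ S ∈ s.powersetCard (2 * k), ∏ i ∈ S, x i
      = ∑ S ∈ s.powersetCard (2 * k), ∏ i ∈ S, 2 * x i := by
    intro k
    rw [mul_sum]
    refine sum_congr rfl fun S hS => ?_
    rw [prod_mul_distrib, prod_const, (mem_powersetCard.1 hS).2, pow_mul]
    norm_num
  simp_rw [hscale]
  rw [← sum_image (f := fun l => ∑ S ∈ s.powersetCard l, ∏ i ∈ S, 2 * x i) (s := t)
    (g := (2 * ·)) fun _ _ _ _ h => by simpa using h]
  exact sum_sum_powersetCard_le_prod_one_add s (fun j hj => by linarith [hx j hj]) _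

end SymmetricSums

theorem tendsto_sum_Ico_atTop_of_not_summable {f : ℕ → ℝ} (hf : ∀ j, 0 ≤ f j)
    (hs : ¬ Summable f) (n : ℕ) : Tendsto (fun m => ∑ j ∈ Ico n (n + m), f j) atTop atTop := by
  simp_rw [sum_Ico_eq_sum_range, Nat.add_sub_cancel_left, add_comm n]
  exact (not_summable_iff_tendsto_nat_atTop_of_nonneg fun j => hf _).1
    ((summable_nat_add_iff n).not.2 hs)

theorem eventually_sum_powersetCard_Ico_le_succ {x : ℕ → ℝ} (hx0 : ∀ j, 0 ≤ x j)
    (hx1 : ∀ j, x j ≤ 1) (hs : ¬ Summable x) (n l : ℕ) :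
    ∀ᶠ m in atTop, ∑ S ∈ (Ico n (n + m)).powersetCard l, ∏ i ∈ S, x i
      ≤ ∑ T ∈ (Ico n (n + m)).powersetCard (l + 1), ∏ i ∈ T, x i := by
  filter_upwards [(tendsto_sum_Ico_atTop_of_not_summable hx0 hs n).eventually_ge_atTop
    (2 * l + 1)] with m hm
  exact sum_powersetCard_le_succ_of_le_sum _ (fun j _ => hx0 j) (fun j _ => hx1 j) hm

theorem prod_div_add_two_mul_sum_four_pow_mul_sum_powersetCard_le_one {ι : Type*}
    [DecidableEq ι] (s : Finset ι) (a : ι → ℕ) (t : Finset ℕ) :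
    (∏ j ∈ s, (a j : ℝ) / (a j + 2)) *
      ∑ k ∈ t, 4 ^ k * ∑ S ∈ s.powersetCard (2 * k), ∏ i ∈ S, (a i : ℝ)⁻¹ ≤ 1 := by
  refine (mul_le_mul_of_nonneg_left (sum_four_pow_mul_sum_powersetCard_le s
    (fun j _ => by positivity) t) (prod_nonneg fun j _ => by positivity)).trans ?_
  rw [← prod_mul_distrib]
  refine prod_le_one (fun j _ => by positivity) fun j _ => ?_
  rcases (a j).eq_zero_or_pos with h | h
  · simp [h]
  · have : (a j : ℝ) ≠ 0 := by positivity
    exact le_of_eq (by field_simp)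

theorem no_invariant_measure_criterion_general (a : ℕ → ℕ)
    (hdiv : ¬ Summable fun j : ℕ => 1 / (a j : ℝ)) (n : ℕ)
    (P : ℕ → ℝ) (hP : ∀ m : ℕ, P m = ∏ j ∈ Finset.Ico n (n + m), (a j : ℝ) / ((a j : ℝ) + 2))
    (E : ℕ → ℕ → ℝ)
    (hE : ∀ l m : ℕ, E l m = ∑ S ∈ (Finset.Ico n (n + m)).powersetCard l,
      ∏ j ∈ S, (a j : ℝ)⁻¹)
    (g : ℕ → ℝ)
    (hg : ∀ m : ℕ, g m = P m * ∑ k ∈ Finset.range (m / 2 + 1),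
      (Nat.choose (2 * k) k : ℝ) * E (2 * k) m) :
    Tendsto g atTop (nhds 0) ↔
    ∀ l : ℕ, Tendsto (fun m : ℕ => P m * E l m) atTop (nhds 0) := by
  have hx0 : ∀ j, 0 ≤ (a j : ℝ)⁻¹ := fun j => by positivity
  have hP0 : ∀ m, 0 ≤ P m := fun m => hP m ▸ prod_nonneg fun j _ => by positivity
  have hPE0 : ∀ l m, 0 ≤ P m * E l m := fun l m =>
    mul_nonneg (hP0 m) (hE l m ▸ sum_nonneg fun S _ => prod_nonneg fun j _ => hx0 j)
  obtain rfl : g = fun m =>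
      ∑ k ∈ range (m / 2 + 1), (k.centralBinom : ℝ) * (P m * E (2 * k) m) := by
    ext m
    simp_rw [hg, mul_sum, Nat.centralBinom_eq_two_mul_choose, mul_left_comm]
  constructor
  · intro hg0 l
    have heven := tendsto_zero_of_tendsto_sum_mul
      (fun k => Nat.one_le_cast.2 k.centralBinom_pos) (fun k => hPE0 (2 * k))
      (fun k => eventually_atTop.2 ⟨2 * k, fun m hm => mem_range.2 (by omega)⟩) hg0
    obtain ⟨k, rfl | rfl⟩ := l.even_or_odd'
    · exact heven k
    refine squeeze_zero' (.of_forall (hPE0 _)) ?_ (heven (k + 1))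
    filter_upwards [eventually_sum_powersetCard_Ico_le_succ hx0 (fun j => Nat.cast_inv_le_one _)
      (by simpa using hdiv) n (2 * k + 1)] with m hm
    rw [hE, hE]
    exact mul_le_mul_of_nonneg_left hm (hP0 m)
  · intro h
    have hw1 : ∀ m, ∑ k ∈ range (m / 2 + 1), 4 ^ k * (P m * E (2 * k) m) ≤ 1 := fun m => by
      simp_rw [mul_left_comm _ (P m), ← mul_sum, hP, hE]
      exact prod_div_add_two_mul_sum_four_pow_mul_sum_powersetCard_le_one _ a _
    refine (tendsto_sum_mul_of_tendsto_zero tendsto_centralBinom_div_four_pow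
      (fun k m => mul_nonneg (by positivity) (hPE0 _ m)) hw1
      fun k => by simpa using (h (2 * k)).const_mul (4 ^ k)).congr
        fun m => sum_congr rfl fun k _ => ?_
    field_simp

theorem no_invariant_measure_criterion (a : ℕ → ℕ) (ha : ∀ j : ℕ, 1 ≤ a j)
    (hdiv : ¬ Summable fun j : ℕ => 1 / (a j : ℝ)) (n : ℕ)
    (P : ℕ → ℝ) (hP : ∀ m : ℕ, P m = ∏ j ∈ Finset.Ico n (n + m), (a j : ℝ) / ((a j : ℝ) + 2))
    (E : ℕ → ℕ → ℝ)
    (hE : ∀ l m : ℕ, E l m = ∑ S ∈ (Finset.Ico n (n + m)).powersetCard l,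
      ∏ j ∈ S, (a j : ℝ)⁻¹)
    (g : ℕ → ℝ)
    (hg : ∀ m : ℕ, g m = P m * ∑ k ∈ Finset.range (m / 2 + 1),
      (Nat.choose (2 * k) k : ℝ) * E (2 * k) m) :
    Tendsto g atTop (nhds 0) ↔
    ∀ l : ℕ, Tendsto (fun m : ℕ => P m * E l m) atTop (nhds 0) :=
  no_invariant_measure_criterion_general a hdiv n P hP E hE g hg
end

section
/- Let r, c : ℕ → ℝ and W : ℕ → ℕ satisfy, for all n: 0 < c n, c n ≤ r n, 1 ≤ W n, and (c n) * (W n) ≤ (r n) * (W (n+1)). Then the function n ↦ ((∏_{i ∈ Finset.range n} r i) / (∏_{i ∈ Finset.range (n+1)} c i)) * ((r n) * (W (n+1)) - (c n) * (W n)) is summable if and only if the partial products ∏_{i ∈ Finset.range n} (r i / c i) are bounded above and the sequence n ↦ W n is bounded above. -/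
/-! Writing `Q n = ∏_{i<n} r i / c i`, the `n`-th term of the series is the increment
`Q (n+1) W (n+1) - Q n W n`, which is nonnegative by the column-sum inequality. So the series
telescopes along the monotone sequence `Q n W n` and converges iff that sequence is bounded;
as `Q ≥ 1` and `W ≥ 1`, this holds iff both factors are bounded. -/

open Finset

theorem summable_sub_iff_bddAbove_of_monotone {f : ℕ → ℝ} (hf : Monotone f) :
    Summable (fun n => f (n + 1) - f n) ↔ BddAbove (Set.range f) := by
  have hnonneg : ∀ n, 0 ≤ f (n + 1) - f n := fun n => sub_nonneg.2 (hf n.le_succ)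
  constructor
  · refine fun hS => ⟨f 0 + ∑' n, (f (n + 1) - f n), ?_⟩
    rintro _ ⟨n, rfl⟩
    have := hS.sum_le_tsum (range n) fun i _ => hnonneg i
    rw [sum_range_sub] at this
    linarith
  · rintro ⟨C, hC⟩
    refine summable_of_sum_range_le hnonneg (c := C - f 0) fun n => ?_
    rw [sum_range_sub]
    linarith [hC ⟨n, rfl⟩]

theorem bddAbove_range_mul_iff {ι α : Type*} [Semiring α] [PartialOrder α] [IsOrderedRing α]
    {f g : ι → α} (hf : ∀ i, 1 ≤ f i) (hg : ∀ i, 1 ≤ g i) :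
    BddAbove (Set.range (f * g)) ↔ BddAbove (Set.range f) ∧ BddAbove (Set.range g) := by
  have hf0 i : 0 ≤ f i := zero_le_one.trans (hf i)
  have hg0 i : 0 ≤ g i := zero_le_one.trans (hg i)
  refine ⟨fun h => ⟨h.range_mono _ fun i => le_mul_of_one_le_right (hf0 i) (hg i),
    h.range_mono _ fun i => le_mul_of_one_le_left (hg0 i) (hf i)⟩, ?_⟩
  rintro ⟨⟨C, hC⟩, ⟨D, hD⟩⟩
  refine ⟨C * D, ?_⟩
  rintro _ ⟨i, rfl⟩
  exact mul_le_mul (hC ⟨i, rfl⟩) (hD ⟨i, rfl⟩) (hg0 i) ((hf0 i).trans (hC ⟨i, rfl⟩))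

theorem bddAbove_range_natCast_iff {ι α : Type*} [Semiring α] [PartialOrder α] [IsOrderedRing α]
    [FloorSemiring α] (f : ι → ℕ) :
    BddAbove (Set.range fun i => (f i : α)) ↔ BddAbove (Set.range f) := by
  refine ⟨fun ⟨C, hC⟩ => ⟨⌊C⌋₊, ?_⟩, fun ⟨M, hM⟩ => ⟨M, ?_⟩⟩ <;> rintro _ ⟨i, rfl⟩
  · exact Nat.le_floor (hC ⟨i, rfl⟩)
  · exact Nat.mono_cast (hM ⟨i, rfl⟩)

theorem prod_div_prod_succ_mul_sub {K : Type*} [Field K] {r c : ℕ → K} (hc : ∀ i, c i ≠ 0)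
    (n : ℕ) (x y : K) :
    (∏ i ∈ range n, r i) / (∏ i ∈ range (n + 1), c i) * (r n * x - c n * y) =
      (∏ i ∈ range (n + 1), r i / c i) * x - (∏ i ∈ range n, r i / c i) * y := by
  have hprod : ∏ i ∈ range n, c i ≠ 0 := prod_ne_zero_iff.2 fun i _ => hc i
  rw [prod_div_distrib, prod_div_distrib, prod_range_succ, prod_range_succ]
  field_simp [hc n]

theorem ecs_subdiagram_finite_extension (r c : ℕ → ℝ) (W : ℕ → ℕ)
    (hc : ∀ n : ℕ, 0 < c n) (hcr : ∀ n : ℕ, c n ≤ r n)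
    (hW : ∀ n : ℕ, 1 ≤ W n)
    (hmono : ∀ n : ℕ, c n * (W n : ℝ) ≤ r n * (W (n + 1) : ℝ)) :
    Summable (fun n : ℕ =>
      ((∏ i ∈ Finset.range n, r i) / (∏ i ∈ Finset.range (n + 1), c i)) *
        (r n * (W (n + 1) : ℝ) - c n * (W n : ℝ))) ↔
    ((∃ C : ℝ, ∀ n : ℕ, ∏ i ∈ Finset.range n, (r i / c i) ≤ C) ∧
      (∃ M : ℕ, ∀ n : ℕ, W n ≤ M)) := by
  let Q : ℕ → ℝ := fun n => ∏ i ∈ range n, r i / c i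
  let f : ℕ → ℝ := Q * fun n => (W n : ℝ)
  have hQ n : 1 ≤ Q n := one_le_prod fun i _ => (one_le_div (hc i)).2 (hcr i)
  have hW' n : (1 : ℝ) ≤ W n := Nat.one_le_cast.2 (hW n)
  have hterm n : (∏ i ∈ range n, r i) / (∏ i ∈ range (n + 1), c i) *
      (r n * (W (n + 1) : ℝ) - c n * (W n : ℝ)) = f (n + 1) - f n :=
    prod_div_prod_succ_mul_sub (fun i => (hc i).ne') n _ _
  have hf : Monotone f := monotone_nat_of_le_succ fun n => by
    rw [← sub_nonneg, ← hterm]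
    exact mul_nonneg (div_nonneg (prod_nonneg fun i _ => (hc i).le.trans (hcr i))
      (prod_nonneg fun i _ => (hc i).le)) (sub_nonneg.2 (hmono n))
  rw [funext hterm, summable_sub_iff_bddAbove_of_monotone hf, bddAbove_range_mul_iff hQ hW',
    bddAbove_range_natCast_iff]
  simp only [bddAbove_def, Set.forall_mem_range, Q]
end
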